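/- arXiv:2410.04344 — 3 statements merged into one kernel-verified Lean document; each statement's English description precedes it below -/
import Mathlib

section
/- Let (𝒳,μ) be a probability space, p≥2 a real number, M, K ∈ ℕ⁺, ψ:𝒳→[0,∞) measurable with ∫_𝒳 ψ^{2p} dμ < ∞, and g₁,…,g_K:𝒳→ℝ measurable with |g_j(x)| ≤ ψ(x)² for all j and all x∈𝒳. Let X₁,…,X_M be i.i.d. random elements of 𝒳 with law μ. Then E[ max_{1≤j≤K} | M^{−1} Σ_{i=1}^M g_j(X_i) − ∫_𝒳 g_j dμ |^p ]^{1/p} ≤ 16 K^{1/p} √p ( ∫_𝒳 ψ^{2p} dμ )^{1/p} / √M. -/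
/-!
Bounding the maximum over `j` by the sum reduces the claim to the `p`-th moment of a single
centred empirical mean, which is a Marcinkiewicz–Zygmund inequality. Jensen's inequality against
an independent copy of the sample replaces the centring by the antisymmetric kernel
`f x - f y`. Swapping the two copies in any set of coordinates preserves the law and flips the
signs of the corresponding terms, so the moment equals its average over all sign patterns, and
Khintchine's inequality (from `cosh x ≤ exp (x ^ 2 / 2)`) followed by the power-mean inequality
bounds that average by `2 e^{p/2} p^{p/2} M^{p/2 - 1} ∑ᵢ |aᵢ|^p`. All constants fit into `16^p`.
-/

open MeasureTheory Finset Real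

/-- A pattern `s : ι → Bool` encodes a Rademacher sign vector, so sums over all patterns are
`2 ^ card ι` times Rademacher expectations. -/
def boolSign (b : Bool) : ℝ := if b then -1 else 1

lemma abs_rpow_le_mul_exp_add_exp {p t : ℝ} (hp : 0 < p) (ht : 0 < t) (x : ℝ) :
    |x| ^ p ≤ (p / t) ^ p * (exp (t * x) + exp (-(t * x))) := by
  have hlin : |x| ≤ p / t * exp (t * |x| / p) := by
    have := add_one_le_exp (t * |x| / p)
    calc |x| = p / t * (t * |x| / p) := by field_simp
      _ ≤ p / t * exp (t * |x| / p) := by gcongr; linarith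
  have hexp : exp (t * |x|) ≤ exp (t * x) + exp (-(t * x)) := by
    rcases abs_cases x with ⟨h, _⟩ | ⟨h, _⟩ <;> rw [h]
    · linarith [exp_pos (-(t * x))]
    · rw [mul_neg]; linarith [exp_pos (t * x)]
  calc |x| ^ p ≤ (p / t * exp (t * |x| / p)) ^ p := by gcongr
    _ = (p / t) ^ p * exp (t * |x|) := by
        rw [mul_rpow (by positivity) (exp_pos _).le, ← exp_mul, div_mul_cancel₀ _ hp.ne']
    _ ≤ (p / t) ^ p * (exp (t * x) + exp (-(t * x))) := by gcongr

section Rademacher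

variable {ι : Type*} [Fintype ι] [DecidableEq ι]

lemma sum_exp_sum_boolSign_mul_le (b : ι → ℝ) :
    ∑ s : ι → Bool, exp (∑ i, boolSign (s i) * b i)
      ≤ 2 ^ Fintype.card ι * exp ((∑ i, b i ^ 2) / 2) := by
  have hpair (x : ℝ) : ∑ c : Bool, exp (boolSign c * x) ≤ 2 * exp (x ^ 2 / 2) := by
    have := cosh_le_exp_half_sq x
    rw [cosh_eq] at this
    simp only [Fintype.sum_bool, boolSign, if_true, Bool.false_eq_true, if_false, neg_mul, one_mul]
    linarith
  calc ∑ s : ι → Bool, exp (∑ i, boolSign (s i) * b i)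
      = ∏ i, ∑ c : Bool, exp (boolSign c * b i) := by
        simp_rw [exp_sum]; exact (Fintype.prod_sum fun i c => exp (boolSign c * b i)).symm
    _ ≤ ∏ i, 2 * exp (b i ^ 2 / 2) :=
        prod_le_prod (fun _ _ => sum_nonneg fun _ _ => (exp_pos _).le) fun i _ => hpair (b i)
    _ = 2 ^ Fintype.card ι * exp ((∑ i, b i ^ 2) / 2) := by
        rw [prod_mul_distrib, prod_const, ← exp_sum, sum_div, card_univ]

/-- Khintchine's inequality. -/
lemma sum_abs_sum_boolSign_mul_rpow_le {p : ℝ} (hp : 0 < p) (a : ι → ℝ) :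
    ∑ s : ι → Bool, |∑ i, boolSign (s i) * a i| ^ p
      ≤ 2 ^ Fintype.card ι * (2 * exp (p / 2) * (p * ∑ i, a i ^ 2) ^ (p / 2)) := by
  set S := ∑ i, a i ^ 2
  rcases (sum_nonneg fun i _ => sq_nonneg (a i) : 0 ≤ S).eq_or_lt with hS | hS
  · have ha (i : ι) : a i = 0 := by
      simpa using (sum_eq_zero_iff_of_nonneg fun i _ => sq_nonneg (a i)).1 hS.symm i (mem_univ i)
    rw [show S = 0 from hS.symm]
    simp [ha, zero_rpow hp.ne', zero_rpow (half_pos hp).ne']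
  set t := √(p / S)
  have ht : 0 < t := sqrt_pos.2 (div_pos hp hS)
  have ht2 : t ^ 2 = p / S := sq_sqrt (div_pos hp hS).le
  have hmgf (c : ℝ) (hc : c ^ 2 = t ^ 2) :
      ∑ s : ι → Bool, exp (c * ∑ i, boolSign (s i) * a i) ≤ 2 ^ Fintype.card ι * exp (p / 2) := by
    have hsq : ∑ i, (c * a i) ^ 2 = p := by
      simp_rw [mul_pow, ← mul_sum, hc, ht2]
      exact div_mul_cancel₀ p hS.ne'
    simpa [mul_sum, mul_left_comm c, hsq] using sum_exp_sum_boolSign_mul_le fun i => c * a i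
  have hconst : (p / t) ^ p = (p * S) ^ (p / 2) := by
    have hsq : (p / t) ^ 2 = p * S := by rw [div_pow, ht2]; field_simp
    rw [← hsq, ← rpow_natCast_mul (by positivity)]
    ring_nf
  calc ∑ s : ι → Bool, |∑ i, boolSign (s i) * a i| ^ p
      ≤ ∑ s : ι → Bool, (p / t) ^ p * (exp (t * ∑ i, boolSign (s i) * a i)
          + exp (-t * ∑ i, boolSign (s i) * a i)) :=
        sum_le_sum fun s _ => by simpa only [neg_mul] using abs_rpow_le_mul_exp_add_exp hp ht _
    _ = (p / t) ^ p * (∑ s : ι → Bool, exp (t * ∑ i, boolSign (s i) * a i)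
          + ∑ s : ι → Bool, exp (-t * ∑ i, boolSign (s i) * a i)) := by
        rw [← sum_add_distrib, mul_sum]
    _ ≤ (p / t) ^ p * (2 ^ Fintype.card ι * exp (p / 2) + 2 ^ Fintype.card ι * exp (p / 2)) := by
        gcongr
        exacts [hmgf t rfl, hmgf (-t) (neg_sq t)]
    _ = 2 ^ Fintype.card ι * (2 * exp (p / 2) * (p * S) ^ (p / 2)) := by rw [hconst]; ring

lemma sum_abs_sum_boolSign_mul_rpow_le_sum_abs_rpow {p : ℝ} (hp : 2 ≤ p) (a : ι → ℝ) :
    ∑ s : ι → Bool, |∑ i, boolSign (s i) * a i| ^ p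
      ≤ 2 ^ Fintype.card ι *
        (2 * exp (p / 2) * p ^ (p / 2) *
          ((Fintype.card ι : ℝ) ^ (p / 2 - 1) * ∑ i, |a i| ^ p)) := by
  have hp0 : 0 < p := by linarith
  have hpow (x : ℝ) : (x ^ 2) ^ (p / 2) = |x| ^ p := by
    rw [← sq_abs, ← rpow_natCast_mul (abs_nonneg x)]; ring_nf
  have hmean : (∑ i, a i ^ 2) ^ (p / 2) ≤ (Fintype.card ι : ℝ) ^ (p / 2 - 1) * ∑ i, |a i| ^ p := by
    simpa [hpow] using
      rpow_sum_le_const_mul_sum_rpow_of_nonneg (s := univ) (p := p / 2) (f := fun i => a i ^ 2)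
        (by linarith) fun i _ => sq_nonneg (a i)
  refine (sum_abs_sum_boolSign_mul_rpow_le hp0 a).trans ?_
  rw [mul_rpow hp0.le (sum_nonneg fun i _ => sq_nonneg _), ← mul_assoc _ (p ^ (p / 2))]
  gcongr

end Rademacher

section Integrals

variable {α : Type*} [MeasurableSpace α] {μ : Measure α}

lemma MeasureTheory.MemLp.integrable_abs_rpow [IsFiniteMeasure μ] {p : ℝ} (hp : 0 ≤ p) {f : α → ℝ}
    (hf : MemLp f (ENNReal.ofReal p) μ) : Integrable (fun x => |f x| ^ p) μ := by
  simpa [ENNReal.toReal_ofReal hp] using hf.integrable_norm_rpow'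

lemma memLp_ofReal_of_abs_rpow_le {p : ℝ} (hp : 0 < p) {f φ : α → ℝ}
    (hf : AEStronglyMeasurable f μ) (hφ : Integrable φ μ) (hle : ∀ x, |f x| ^ p ≤ φ x) :
    MemLp f (ENNReal.ofReal p) μ := by
  refine (integrable_norm_rpow_iff hf (by simpa using hp) ENNReal.ofReal_ne_top).1
    (hφ.mono' (hf.norm.aemeasurable.pow_const _).aestronglyMeasurable (.of_forall fun x => ?_))
  simpa [ENNReal.toReal_ofReal hp.le, abs_of_nonneg (rpow_nonneg (abs_nonneg _) p)] using hle x

lemma abs_integral_rpow_le_integral_abs_rpow [IsProbabilityMeasure μ] {p : ℝ} (hp : 1 ≤ p)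
    {f : α → ℝ} (hf : MemLp f (ENNReal.ofReal p) μ) :
    |∫ x, f x ∂μ| ^ p ≤ ∫ x, |f x| ^ p ∂μ := by
  have hf1 : Integrable f μ := hf.integrable (by simpa using hp)
  calc |∫ x, f x ∂μ| ^ p ≤ (∫ x, |f x| ∂μ) ^ p := by
        gcongr; exact abs_integral_le_integral_abs
    _ ≤ ∫ x, |f x| ^ p ∂μ :=
        (convexOn_rpow hp).map_integral_le (continuous_id.rpow_const fun _ => Or.inr
          (by linarith)).continuousOn isClosed_Ici (.of_forall fun x => abs_nonneg (f x))
          hf1.abs (hf.integrable_abs_rpow (by linarith))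

lemma integral_abs_sub_integral_rpow_le_integral_prod [IsProbabilityMeasure μ] {p : ℝ}
    (hp : 1 ≤ p) {V : α → ℝ} (hV : MemLp V (ENNReal.ofReal p) μ) :
    ∫ x, |V x - ∫ y, V y ∂μ| ^ p ∂μ ≤ ∫ z, |V z.1 - V z.2| ^ p ∂μ.prod μ := by
  have hint : Integrable (fun z : α × α => |V z.1 - V z.2| ^ p) (μ.prod μ) :=
    ((hV.comp_measurePreserving measurePreserving_fst).sub
      (hV.comp_measurePreserving measurePreserving_snd)).integrable_abs_rpow (by linarith)
  have hJensen (x : α) : |V x - ∫ y, V y ∂μ| ^ p ≤ ∫ y, |V x - V y| ^ p ∂μ := by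
    have := abs_integral_rpow_le_integral_abs_rpow (f := fun y => V x - V y) hp
      ((memLp_const (V x)).sub hV)
    rwa [integral_sub (integrable_const _) (hV.integrable (by simpa using hp)), integral_const,
      probReal_univ, one_smul] at this
  calc ∫ x, |V x - ∫ y, V y ∂μ| ^ p ∂μ ≤ ∫ x, ∫ y, |V x - V y| ^ p ∂μ ∂μ :=
        integral_mono_of_nonneg (.of_forall fun x => by positivity) hint.integral_prod_left
          (.of_forall hJensen)
    _ = ∫ z, |V z.1 - V z.2| ^ p ∂μ.prod μ := integral_integral hint

end Integrals

section SignFlips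

variable {ι β : Type*} [MeasurableSpace β]

def flipCoords (σ : β ≃ᵐ β) (s : ι → Bool) : (ι → β) ≃ᵐ (ι → β) :=
  MeasurableEquiv.piCongrRight fun i => bif s i then σ else MeasurableEquiv.refl β

lemma flipCoords_apply (σ : β ≃ᵐ β) (s : ι → Bool) (z : ι → β) (i : ι) :
    flipCoords σ s z i = bif s i then σ (z i) else z i := by
  show (bif s i then σ else MeasurableEquiv.refl β) (z i) = _
  cases s i <;> rfl

lemma measurePreserving_flipCoords [Fintype ι] {ρ : Measure β} [SigmaFinite ρ] {σ : β ≃ᵐ β}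
    (hσ : MeasurePreserving σ ρ ρ) (s : ι → Bool) :
    MeasurePreserving (flipCoords σ s) (Measure.pi fun _ => ρ) (Measure.pi fun _ => ρ) :=
  measurePreserving_pi _ _ fun i => by
    cases h : s i
    · simpa [h] using MeasurePreserving.id ρ
    · simpa [h] using hσ

lemma integral_abs_sum_boolSign_mul_rpow_eq [Fintype ι] {ρ : Measure β} [SigmaFinite ρ]
    {σ : β ≃ᵐ β} (hσ : MeasurePreserving σ ρ ρ) {h : β → ℝ} (h_anti : ∀ z, h (σ z) = -h z)
    (s : ι → Bool) (p : ℝ) :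
    ∫ z, |∑ i, boolSign (s i) * h (z i)| ^ p ∂(Measure.pi fun _ : ι => ρ)
      = ∫ z, |∑ i, h (z i)| ^ p ∂(Measure.pi fun _ : ι => ρ) := by
  have hz (z : ι → β) (i : ι) : h (flipCoords σ s z i) = boolSign (s i) * h (z i) := by
    rw [flipCoords_apply]; cases s i <;> simp [boolSign, h_anti]
  simp_rw [← hz]
  exact (measurePreserving_flipCoords hσ s).integral_comp' fun z => |∑ i, h (z i)| ^ p

lemma integral_abs_sum_rpow_le_of_comp_eq_neg [Fintype ι] [DecidableEq ι] {ρ : Measure β}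
    [IsProbabilityMeasure ρ] {p : ℝ} (hp : 2 ≤ p) {σ : β ≃ᵐ β}
    (hσ : MeasurePreserving σ ρ ρ) {h : β → ℝ} (h_anti : ∀ z, h (σ z) = -h z)
    (hh : MemLp h (ENNReal.ofReal p) ρ) :
    ∫ z, |∑ i, h (z i)| ^ p ∂(Measure.pi fun _ : ι => ρ)
      ≤ 2 * exp (p / 2) * p ^ (p / 2) * (Fintype.card ι : ℝ) ^ (p / 2) * ∫ z, |h z| ^ p ∂ρ := by
  have hflip := fun s => integral_abs_sum_boolSign_mul_rpow_eq (ι := ι) hσ h_anti s p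
  set Q := Measure.pi fun _ : ι => ρ
  set n := Fintype.card ι
  set C := 2 * exp (p / 2) * p ^ (p / 2)
  have hp0 : 0 ≤ p := by linarith
  have hcoord (i : ι) : MemLp (fun z : ι → β => h (z i)) (ENNReal.ofReal p) Q :=
    hh.comp_measurePreserving (measurePreserving_eval _ i)
  have hsigned (s : ι → Bool) :
      Integrable (fun z : ι → β => |∑ i, boolSign (s i) * h (z i)| ^ p) Q :=
    (memLp_finsetSum univ fun i _ => (hcoord i).const_mul (boolSign (s i))).integrable_abs_rpow hp0
  have hsum : ∫ z, ∑ i, |h (z i)| ^ p ∂Q = n * ∫ z, |h z| ^ p ∂ρ := by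
    have heval (i : ι) : ∫ z, |h (z i)| ^ p ∂Q = ∫ z, |h z| ^ p ∂ρ :=
      integral_comp_eval (μ := fun _ : ι => ρ) (f := fun x => |h x| ^ p)
        (hh.integrable_abs_rpow hp0).aestronglyMeasurable
    simp [integral_finsetSum _ fun i _ => (hcoord i).integrable_abs_rpow hp0, heval, n]
  have hpower : (n : ℝ) ^ (p / 2 - 1) * n = (n : ℝ) ^ (p / 2) := by
    rw [← rpow_add_one' (Nat.cast_nonneg n) (by linarith)]; ring_nf
  have h2n : (0 : ℝ) < 2 ^ n := by positivity
  refine le_of_mul_le_mul_left ?_ h2n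
  calc (2 : ℝ) ^ n * ∫ z, |∑ i, h (z i)| ^ p ∂Q
      = ∫ z, ∑ s : ι → Bool, |∑ i, boolSign (s i) * h (z i)| ^ p ∂Q := by
        rw [integral_finsetSum _ fun s _ => hsigned s]
        simp [hflip, n]
    _ ≤ ∫ z, 2 ^ n * (C * ((n : ℝ) ^ (p / 2 - 1) * ∑ i, |h (z i)| ^ p)) ∂Q :=
        integral_mono (integrable_finsetSum _ fun s _ => hsigned s)
          (((integrable_finsetSum _ fun i _ => (hcoord i).integrable_abs_rpow hp0).const_mul
            _).const_mul _ |>.const_mul _)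
          fun z => sum_abs_sum_boolSign_mul_rpow_le_sum_abs_rpow hp _
    _ = 2 ^ n * (C * n ^ (p / 2) * ∫ z, |h z| ^ p ∂ρ) := by
        rw [integral_const_mul, integral_const_mul, integral_const_mul, hsum, ← hpower]; ring

end SignFlips

lemma abs_sub_rpow_le {p : ℝ} (hp : 1 ≤ p) (a b : ℝ) :
    |a - b| ^ p ≤ 2 ^ (p - 1) * (|a| ^ p + |b| ^ p) := by
  calc |a - b| ^ p ≤ (|a| + |b|) ^ p := by gcongr; exact abs_sub a b
    _ ≤ 2 ^ (p - 1) * (|a| ^ p + |b| ^ p) := by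
        exact_mod_cast
          NNReal.rpow_add_le_mul_rpow_add_rpow ⟨|a|, abs_nonneg a⟩ ⟨|b|, abs_nonneg b⟩ hp

section MarcinkiewiczZygmund

variable {α ι : Type*} [MeasurableSpace α] {μ : Measure α} [IsProbabilityMeasure μ]
  [Fintype ι] [DecidableEq ι]

lemma integral_prod_abs_sub_rpow_le {p : ℝ} (hp : 1 ≤ p) {f : α → ℝ}
    (hf : MemLp f (ENNReal.ofReal p) μ) :
    ∫ z, |f z.1 - f z.2| ^ p ∂μ.prod μ ≤ 2 ^ p * ∫ x, |f x| ^ p ∂μ := by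
  have hfst : Integrable (fun z : α × α => |f z.1| ^ p) (μ.prod μ) :=
    (hf.comp_measurePreserving measurePreserving_fst).integrable_abs_rpow (by linarith)
  have hsnd : Integrable (fun z : α × α => |f z.2| ^ p) (μ.prod μ) :=
    (hf.comp_measurePreserving measurePreserving_snd).integrable_abs_rpow (by linarith)
  calc ∫ z, |f z.1 - f z.2| ^ p ∂μ.prod μ
      ≤ ∫ z, 2 ^ (p - 1) * (|f z.1| ^ p + |f z.2| ^ p) ∂μ.prod μ :=
        integral_mono_of_nonneg (.of_forall fun _ => by positivity) ((hfst.add hsnd).const_mul _)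
          (.of_forall fun z => abs_sub_rpow_le hp _ _)
    _ = 2 ^ p * ∫ x, |f x| ^ p ∂μ := by
        rw [integral_const_mul, integral_add hfst hsnd, integral_fun_fst (f := fun x => |f x| ^ p),
          integral_fun_snd (f := fun x => |f x| ^ p), rpow_sub_one two_ne_zero]
        simp; ring

/-- A Marcinkiewicz–Zygmund inequality. -/
lemma integral_abs_sum_sub_rpow_le {p : ℝ} (hp : 2 ≤ p) {f : α → ℝ}
    (hf : MemLp f (ENNReal.ofReal p) μ) :
    ∫ ω, |∑ i, f (ω i) - Fintype.card ι * ∫ x, f x ∂μ| ^ p ∂(Measure.pi fun _ : ι => μ)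
      ≤ 2 * exp (p / 2) * p ^ (p / 2) * (Fintype.card ι : ℝ) ^ (p / 2)
        * (2 ^ p * ∫ x, |f x| ^ p ∂μ) := by
  set P := Measure.pi fun _ : ι => μ
  have hcoord (i : ι) : MemLp (fun ω : ι → α => f (ω i)) (ENNReal.ofReal p) P :=
    hf.comp_measurePreserving (measurePreserving_eval _ i)
  have hV : MemLp (fun ω : ι → α => ∑ i, f (ω i)) (ENNReal.ofReal p) P :=
    memLp_finsetSum univ fun i _ => hcoord i
  have hmean : ∫ ω, ∑ i, f (ω i) ∂P = Fintype.card ι * ∫ x, f x ∂μ := by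
    have heval (i : ι) : ∫ ω, f (ω i) ∂P = ∫ x, f x ∂μ :=
      integral_comp_eval (μ := fun _ : ι => μ) hf.aestronglyMeasurable
    rw [integral_finsetSum univ fun i _ =>
      (hcoord i).integrable (ENNReal.one_le_ofReal.2 (by linarith))]
    simp [heval]
  have htransfer : ∫ z, |∑ i, f (z.1 i) - ∑ i, f (z.2 i)| ^ p ∂P.prod P
      = ∫ z, |∑ i, (f (z i).1 - f (z i).2)| ^ p ∂(Measure.pi fun _ : ι => μ.prod μ) := by
    rw [← (measurePreserving_arrowProdEquivProdArrow α α ι (fun _ => μ) (fun _ => μ)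
      ).integral_comp']
    simp only [sum_sub_distrib]
    rfl
  have hh : MemLp (fun z : α × α => f z.1 - f z.2) (ENNReal.ofReal p) (μ.prod μ) :=
    (hf.comp_measurePreserving measurePreserving_fst).sub
      (hf.comp_measurePreserving measurePreserving_snd)
  rw [← hmean]
  calc ∫ ω, |∑ i, f (ω i) - ∫ ω', ∑ i, f (ω' i) ∂P| ^ p ∂P
      ≤ ∫ z, |∑ i, f (z.1 i) - ∑ i, f (z.2 i)| ^ p ∂P.prod P :=
        integral_abs_sub_integral_rpow_le_integral_prod (by linarith) hV
    _ = ∫ z, |∑ i, (f (z i).1 - f (z i).2)| ^ p ∂(Measure.pi fun _ : ι => μ.prod μ) := htransfer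
    _ ≤ 2 * exp (p / 2) * p ^ (p / 2) * (Fintype.card ι : ℝ) ^ (p / 2)
          * ∫ z, |f z.1 - f z.2| ^ p ∂μ.prod μ :=
        integral_abs_sum_rpow_le_of_comp_eq_neg hp (σ := MeasurableEquiv.prodComm)
          Measure.measurePreserving_swap (fun z => (neg_sub _ _).symm) hh
    _ ≤ _ := by gcongr; exact integral_prod_abs_sub_rpow_le (by linarith) hf

end MarcinkiewiczZygmund

lemma two_mul_exp_half_mul_two_rpow_le {p : ℝ} (hp : 1 ≤ p) :
    2 * exp (p / 2) * 2 ^ p ≤ 16 ^ p := by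
  have hexp : exp (p / 2) ≤ 2 ^ p := by
    rw [← exp_one_rpow, show (2 : ℝ) ^ p = 4 ^ (p / 2) by
      rw [show (4 : ℝ) = 2 ^ (2 : ℝ) by norm_num, ← rpow_mul (by norm_num)]; ring_nf]
    gcongr
    linarith [exp_one_lt_d9]
  have htwo : (2 : ℝ) ≤ 2 ^ p := by simpa using rpow_le_rpow_of_exponent_le one_le_two hp
  calc 2 * exp (p / 2) * 2 ^ p ≤ 2 ^ p * 2 ^ p * 2 ^ p := by gcongr
    _ = 8 ^ p := by rw [← mul_rpow, ← mul_rpow] <;> norm_num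
    _ ≤ 16 ^ p := by gcongr; norm_num

lemma one_div_rpow_mul_le_sixteen_mul_sqrt_div_sqrt_rpow {p n : ℝ} (hp : 1 ≤ p) (hn : 0 < n) :
    (1 / n) ^ p * (2 * exp (p / 2) * p ^ (p / 2) * n ^ (p / 2) * 2 ^ p)
      ≤ (16 * √p / √n) ^ p := by
  have hp0 : 0 < p := by linarith
  have hsqrt (x : ℝ) (hx : 0 ≤ x) : √x ^ p = x ^ (p / 2) := by
    rw [sqrt_eq_rpow, ← rpow_mul hx]; ring_nf
  have hn2 : (1 / n) ^ p * n ^ (p / 2) = 1 / n ^ (p / 2) := by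
    have : n ^ p = n ^ (p / 2) * n ^ (p / 2) := by rw [← rpow_add hn]; ring_nf
    rw [div_rpow zero_le_one hn.le, one_rpow, this]
    field_simp
  rw [div_rpow (by positivity) (sqrt_nonneg n), mul_rpow (by norm_num) (sqrt_nonneg p),
    hsqrt p hp0.le, hsqrt n hn.le]
  calc (1 / n) ^ p * (2 * exp (p / 2) * p ^ (p / 2) * n ^ (p / 2) * 2 ^ p)
      = 2 * exp (p / 2) * 2 ^ p * p ^ (p / 2) * ((1 / n) ^ p * n ^ (p / 2)) := by ring
    _ ≤ 16 ^ p * p ^ (p / 2) * ((1 / n) ^ p * n ^ (p / 2)) := by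
        gcongr; exact two_mul_exp_half_mul_two_rpow_le hp
    _ = 16 ^ p * p ^ (p / 2) / n ^ (p / 2) := by rw [hn2]; ring

lemma integral_iSup_le_sum_integral {α ι : Type*} [MeasurableSpace α] {μ : Measure α} [Fintype ι]
    {F : ι → α → ℝ} (hF0 : ∀ i x, 0 ≤ F i x) (hF : ∀ i, Integrable (F i) μ) :
    ∫ x, ⨆ i, F i x ∂μ ≤ ∑ i, ∫ x, F i x ∂μ := by
  rw [← integral_finsetSum _ fun i _ => hF i]
  exact integral_mono_of_nonneg (.of_forall fun x => iSup_nonneg fun i => hF0 i x)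
    (integrable_finsetSum _ fun i _ => hF i) (.of_forall fun x =>
      Real.iSup_le (fun i => single_le_sum (fun j _ => hF0 j x) (mem_univ i))
        (sum_nonneg fun j _ => hF0 j x))

section EmpiricalMeans

variable {α ι : Type*} [MeasurableSpace α] {μ : Measure α} [IsProbabilityMeasure μ]
  [Fintype ι] [DecidableEq ι] [Nonempty ι]

lemma integral_abs_empirical_mean_sub_rpow_le {p : ℝ} (hp : 2 ≤ p) {f : α → ℝ}
    (hf : MemLp f (ENNReal.ofReal p) μ) :
    ∫ ω, |(1 / (Fintype.card ι : ℝ)) * ∑ i, f (ω i) - ∫ x, f x ∂μ| ^ p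
        ∂(Measure.pi fun _ : ι => μ)
      ≤ (16 * √p / √(Fintype.card ι)) ^ p * ∫ x, |f x| ^ p ∂μ := by
  set n : ℝ := (Fintype.card ι : ℝ)
  have hn : 0 < n := Nat.cast_pos.2 Fintype.card_pos
  have hscale (ω : ι → α) : |(1 / n) * ∑ i, f (ω i) - ∫ x, f x ∂μ| ^ p
      = (1 / n) ^ p * |∑ i, f (ω i) - n * ∫ x, f x ∂μ| ^ p := by
    rw [← mul_rpow (by positivity) (abs_nonneg _), ← abs_of_pos (one_div_pos.2 hn), ← abs_mul,
      abs_of_pos (one_div_pos.2 hn)]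
    congr 2; field_simp
  simp_rw [hscale, integral_const_mul]
  calc (1 / n) ^ p * ∫ ω, |∑ i, f (ω i) - n * ∫ x, f x ∂μ| ^ p ∂(Measure.pi fun _ : ι => μ)
      ≤ (1 / n) ^ p *
          (2 * exp (p / 2) * p ^ (p / 2) * n ^ (p / 2) * (2 ^ p * ∫ x, |f x| ^ p ∂μ)) := by
        gcongr; exact integral_abs_sum_sub_rpow_le hp hf
    _ = (1 / n) ^ p * (2 * exp (p / 2) * p ^ (p / 2) * n ^ (p / 2) * 2 ^ p)
          * ∫ x, |f x| ^ p ∂μ := by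
        ring
    _ ≤ (16 * √p / √n) ^ p * ∫ x, |f x| ^ p ∂μ := by
        gcongr
        exact one_div_rpow_mul_le_sixteen_mul_sqrt_div_sqrt_rpow (by linarith) hn

lemma integral_iSup_abs_empirical_mean_sub_rpow_le {κ : Type*} [Fintype κ] {p : ℝ} (hp : 2 ≤ p)
    {F : κ → α → ℝ} (hF : ∀ j, MemLp (F j) (ENNReal.ofReal p) μ) {B : ℝ}
    (hB : ∀ j, ∫ x, |F j x| ^ p ∂μ ≤ B) :
    ∫ ω, ⨆ j, |(1 / (Fintype.card ι : ℝ)) * ∑ i, F j (ω i) - ∫ x, F j x ∂μ| ^ p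
        ∂(Measure.pi fun _ : ι => μ)
      ≤ Fintype.card κ * ((16 * √p / √(Fintype.card ι)) ^ p * B) := by
  have hp0 : 0 ≤ p := by linarith
  have hint (j : κ) : Integrable (fun ω : ι → α =>
      |(1 / (Fintype.card ι : ℝ)) * ∑ i, F j (ω i) - ∫ x, F j x ∂μ| ^ p)
        (Measure.pi fun _ : ι => μ) :=
    (((memLp_finsetSum univ fun i _ => (hF j).comp_measurePreserving
      (measurePreserving_eval _ i)).const_mul _).sub (memLp_const _)).integrable_abs_rpow hp0
  refine (integral_iSup_le_sum_integral (fun j ω => by positivity) hint).trans ?_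
  calc _ ≤ ∑ _j : κ, (16 * √p / √(Fintype.card ι)) ^ p * B :=
        sum_le_sum fun j _ => (integral_abs_empirical_mean_sub_rpow_le hp (hF j)).trans <| by
          gcongr; exact hB j
    _ = _ := by simp

end EmpiricalMeans

theorem maximal_inequality_empirical_means_general
    (𝒳 : Type) [MeasurableSpace 𝒳] (μ : Measure 𝒳) [IsProbabilityMeasure μ]
    (p : ℝ) (hp : 2 ≤ p) (M K : ℕ) (hM : 0 < M)
    (ψ : 𝒳 → ℝ) (hψ0 : ∀ x, 0 ≤ ψ x)
    (hψint : Integrable (fun x => ψ x ^ (2 * p)) μ)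
    (g : Fin K → 𝒳 → ℝ) (hgm : ∀ j, Measurable (g j))
    (hg : ∀ j x, |g j x| ≤ ψ x ^ 2) :
    (∫ ω : Fin M → 𝒳,
        (⨆ j : Fin K, |(1 / (M : ℝ)) * ∑ i : Fin M, g j (ω i) - ∫ x, g j x ∂μ| ^ p)
      ∂(Measure.pi fun _ : Fin M => μ)) ^ ((1 : ℝ) / p) ≤
      16 * (K : ℝ) ^ ((1 : ℝ) / p) * Real.sqrt p *
        (∫ x, ψ x ^ (2 * p) ∂μ) ^ ((1 : ℝ) / p) / Real.sqrt M := by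
  have hp0 : 0 ≤ p := by linarith
  have : Nonempty (Fin M) := ⟨⟨0, hM⟩⟩
  set A := ∫ x, ψ x ^ (2 * p) ∂μ
  set c := 16 * √p / √M
  have hdom (j : Fin K) (x : 𝒳) : |g j x| ^ p ≤ ψ x ^ (2 * p) := by
    rw [show 2 * p = ((2 : ℕ) : ℝ) * p by norm_num, rpow_natCast_mul (hψ0 x)]
    gcongr; exact hg j x
  have hgLp (j : Fin K) : MemLp (g j) (ENNReal.ofReal p) μ :=
    memLp_ofReal_of_abs_rpow_le (by linarith) (hgm j).aestronglyMeasurable hψint (hdom j)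
  have hsup := integral_iSup_abs_empirical_mean_sub_rpow_le (ι := Fin M) hp hgLp fun j =>
    integral_mono ((hgLp j).integrable_abs_rpow hp0) hψint (hdom j)
  rw [Fintype.card_fin, Fintype.card_fin] at hsup
  calc _ ≤ (K * (c ^ p * A)) ^ (1 / p) :=
        rpow_le_rpow (integral_nonneg fun ω => iSup_nonneg fun j => by positivity) hsup
          (by positivity)
    _ = 16 * (K : ℝ) ^ ((1 : ℝ) / p) * √p * A ^ ((1 : ℝ) / p) / √M := by
        have hA : 0 ≤ A := integral_nonneg fun x => rpow_nonneg (hψ0 x) _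
        rw [mul_rpow (by positivity) (by positivity), mul_rpow (by positivity) hA,
          ← rpow_mul (by positivity), mul_one_div_cancel (by linarith), rpow_one]
        ring

/-- maximal inequality used in the generalization analysis, after
Lanthaler–Mishra–Karniadakis.  For i.i.d. samples `X₁,…,X_M ~ μ` and finitely many
functions `g₁,…,g_K` dominated by `ψ²`, the `L^p` norm of the maximal deviation of the
empirical means from the true means is at most `16 K^{1/p} √p ‖ψ‖²_{L^{2p}} / √M`. -/
theorem maximal_inequality_empirical_means
    (𝒳 : Type) [MeasurableSpace 𝒳] (μ : Measure 𝒳) [IsProbabilityMeasure μ]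
    (p : ℝ) (hp : 2 ≤ p) (M K : ℕ) (hM : 0 < M) (hK : 0 < K)
    (ψ : 𝒳 → ℝ) (hψm : Measurable ψ) (hψ0 : ∀ x, 0 ≤ ψ x)
    (hψint : Integrable (fun x => ψ x ^ (2 * p)) μ)
    (g : Fin K → 𝒳 → ℝ) (hgm : ∀ j, Measurable (g j))
    (hg : ∀ j x, |g j x| ≤ ψ x ^ 2) :
    (∫ ω : Fin M → 𝒳,
        (⨆ j : Fin K, |(1 / (M : ℝ)) * ∑ i : Fin M, g j (ω i) - ∫ x, g j x ∂μ| ^ p)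
      ∂(Measure.pi fun _ : Fin M => μ)) ^ ((1 : ℝ) / p) ≤
      16 * (K : ℝ) ^ ((1 : ℝ) / p) * Real.sqrt p *
        (∫ x, ψ x ^ (2 * p) ∂μ) ^ ((1 : ℝ) / p) / Real.sqrt M :=
  maximal_inequality_empirical_means_general 𝒳 μ p hp M K hM ψ hψ0 hψint g hgm hg
end

section
/- Let σ₂(x):=max(0,x)². Then for all x∈ℝ: s(x) = 2σ₂(x) − 4σ₂(x − 1/2) + 2σ₂(x − 1) − 2σ₂(x − 5) + 4σ₂(x − 11/2) − 2σ₂(x − 6). In particular, the cutoff function s is exactly realized by a σ₂ neural network with one hidden layer. -/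
open scoped BigOperators
open MeasureTheory

noncomputable section




/-- squared ReLU, the activation `σ₂` -/
def sig2 (x : ℝ) : ℝ := (max 0 x) ^ 2

/-- activation choice: `t = 0` gives `σ₁` (ReLU), `t = 1` gives `σ₂` (squared ReLU) -/
def sigAct (t : Fin 2) (x : ℝ) : ℝ := (max 0 x) ^ ((t : ℕ) + 1)

/-- A feedforward neural network with input dimension `m` and scalar output, in which every
hidden layer applies an affine map followed coordinatewise by one of the activations σ₁, σ₂. -/
inductive Net : ℕ → Type where
  | out : {m : ℕ} → (Fin m → ℝ) → ℝ → Net m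
  | layer : {m n : ℕ} → Fin 2 → (Fin n → Fin m → ℝ) → (Fin n → ℝ) → Net n → Net m

namespace Net

/-- evaluation of a network -/
def eval : {m : ℕ} → Net m → (Fin m → ℝ) → ℝ
  | _, .out w b, x => (∑ j, w j * x j) + b
  | _, .layer t W b rest, x => eval rest fun i => sigAct t ((∑ j, W i j * x j) + b i)

/-- number of hidden layers -/
def depth : {m : ℕ} → Net m → ℕ
  | _, .out _ _ => 0
  | _, .layer _ _ _ rest => depth rest + 1

/-- every hidden layer has at most `W` neurons -/
def widthLe : {m : ℕ} → Net m → ℕ → Prop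
  | _, .out _ _, _ => True
  | _, @Net.layer _ n _ _ _ rest, W => n ≤ W ∧ widthLe rest W

/-- total number of parameters (entries of weight matrices and bias vectors) -/
def params : {m : ℕ} → Net m → ℕ
  | m, .out _ _ => m + 1
  | m, @Net.layer _ n _ _ _ rest => n * m + n + params rest

/-- the network only uses the ReLU activation σ₁ -/
def isReLU : {m : ℕ} → Net m → Prop
  | _, .out _ _ => True
  | _, .layer t _ _ rest => t = 0 ∧ isReLU rest

end Net



/-- the piecewise-quadratic cutoff function `s` -/
def sFun (x : ℝ) : ℝ :=
  if x < 0 then 0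
  else if x ≤ 1 / 2 then 2 * x ^ 2
  else if x ≤ 1 then -2 * (x - 1) ^ 2 + 1
  else if x ≤ 5 then 1
  else if x ≤ 11 / 2 then -2 * (x - 5) ^ 2 + 1
  else if x ≤ 6 then 2 * (x - 6) ^ 2
  else 0

/-- `s_m(x) = s(4Kx + 5 - 4m)` -/
def smOne (K m : ℕ) (x : ℝ) : ℝ := sFun (4 * K * x + 5 - 4 * m)

/-- `s_𝐦(x) = ∏_j s_{m_j}(x_j)`, the partition-of-unity factor -/
def smProd (d K : ℕ) (mv : Fin d → ℕ) (x : Fin d → ℝ) : ℝ := ∏ j, smOne K (mv j) (x j)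

set_option maxHeartbeats 1000000 in
/-- the cutoff function `s` is an explicit linear combination of six shifted
squared-ReLUs; in particular it is exactly realized by a σ₂ neural network with one hidden
layer. -/
theorem cutoff_as_squared_relu :
    (∀ x : ℝ, sFun x =
        2 * sig2 x - 4 * sig2 (x - 1 / 2) + 2 * sig2 (x - 1) -
          2 * sig2 (x - 5) + 4 * sig2 (x - 11 / 2) - 2 * sig2 (x - 6)) ∧
      ∃ φ : Net 1, φ.depth ≤ 1 ∧ ∀ x : ℝ, φ.eval (fun _ => x) = sFun x := by
  have s0 : ∀ {y : ℝ}, y ≤ 0 → sig2 y = 0 := by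
    intro y h; unfold sig2; rw [max_eq_left h]; ring
  have s1 : ∀ {y : ℝ}, 0 ≤ y → sig2 y = y ^ 2 := by
    intro y h; unfold sig2; rw [max_eq_right h]
  have key : ∀ x : ℝ, sFun x =
      2 * sig2 x - 4 * sig2 (x - 1 / 2) + 2 * sig2 (x - 1) -
        2 * sig2 (x - 5) + 4 * sig2 (x - 11 / 2) - 2 * sig2 (x - 6) := by
    intro x
    rcases lt_or_ge x 0 with h0 | h0
    · rw [s0 h0.le, s0 (by linarith : x - 1/2 ≤ 0), s0 (by linarith : x - 1 ≤ 0),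
        s0 (by linarith : x - 5 ≤ 0), s0 (by linarith : x - 11/2 ≤ 0),
        s0 (by linarith : x - 6 ≤ 0)]
      simp only [sFun, if_pos h0]; ring
    rcases le_or_gt x (1/2) with h1 | h1
    · rw [s1 h0, s0 (by linarith : x - 1/2 ≤ 0), s0 (by linarith : x - 1 ≤ 0),
        s0 (by linarith : x - 5 ≤ 0), s0 (by linarith : x - 11/2 ≤ 0),
        s0 (by linarith : x - 6 ≤ 0)]
      simp only [sFun, if_neg (not_lt.2 h0), if_pos h1]; ring
    rcases le_or_gt x 1 with h2 | h2
    · rw [s1 h0, s1 (by linarith : (0:ℝ) ≤ x - 1/2), s0 (by linarith : x - 1 ≤ 0),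
        s0 (by linarith : x - 5 ≤ 0), s0 (by linarith : x - 11/2 ≤ 0),
        s0 (by linarith : x - 6 ≤ 0)]
      simp only [sFun, if_neg (not_lt.2 h0), if_neg (not_le.2 h1), if_pos h2]; ring
    rcases le_or_gt x 5 with h3 | h3
    · rw [s1 h0, s1 (by linarith : (0:ℝ) ≤ x - 1/2), s1 (by linarith : (0:ℝ) ≤ x - 1),
        s0 (by linarith : x - 5 ≤ 0), s0 (by linarith : x - 11/2 ≤ 0),
        s0 (by linarith : x - 6 ≤ 0)]
      simp only [sFun, if_neg (not_lt.2 h0), if_neg (not_le.2 h1), if_neg (not_le.2 h2),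
        if_pos h3]; ring
    rcases le_or_gt x (11/2) with h4 | h4
    · rw [s1 h0, s1 (by linarith : (0:ℝ) ≤ x - 1/2), s1 (by linarith : (0:ℝ) ≤ x - 1),
        s1 (by linarith : (0:ℝ) ≤ x - 5), s0 (by linarith : x - 11/2 ≤ 0),
        s0 (by linarith : x - 6 ≤ 0)]
      simp only [sFun, if_neg (not_lt.2 h0), if_neg (not_le.2 h1), if_neg (not_le.2 h2),
        if_neg (not_le.2 h3), if_pos h4]; ring
    rcases le_or_gt x 6 with h5 | h5
    · rw [s1 h0, s1 (by linarith : (0:ℝ) ≤ x - 1/2), s1 (by linarith : (0:ℝ) ≤ x - 1),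
        s1 (by linarith : (0:ℝ) ≤ x - 5), s1 (by linarith : (0:ℝ) ≤ x - 11/2),
        s0 (by linarith : x - 6 ≤ 0)]
      simp only [sFun, if_neg (not_lt.2 h0), if_neg (not_le.2 h1), if_neg (not_le.2 h2),
        if_neg (not_le.2 h3), if_neg (not_le.2 h4), if_pos h5]; ring
    · rw [s1 h0, s1 (by linarith : (0:ℝ) ≤ x - 1/2), s1 (by linarith : (0:ℝ) ≤ x - 1),
        s1 (by linarith : (0:ℝ) ≤ x - 5), s1 (by linarith : (0:ℝ) ≤ x - 11/2),
        s1 (by linarith : (0:ℝ) ≤ x - 6)]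
      simp only [sFun, if_neg (not_lt.2 h0), if_neg (not_le.2 h1), if_neg (not_le.2 h2),
        if_neg (not_le.2 h3), if_neg (not_le.2 h4), if_neg (not_le.2 h5)]; ring
  refine ⟨key, ?_⟩
  refine ⟨Net.layer 1 (fun _ _ => (1 : ℝ)) ![0, -(1/2), -1, -5, -(11/2), -6]
      (Net.out ![2, -4, 2, -2, 4, -2] 0), le_refl 1, ?_⟩
  intro x
  rw [key x]
  have hact : ∀ y : ℝ, sigAct 1 y = sig2 y := fun y => rfl
  have w0 : (![2, -4, 2, -2, 4, -2] : Fin 6 → ℝ) 0 = 2 := rfl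
  have w1 : (![2, -4, 2, -2, 4, -2] : Fin 6 → ℝ) 1 = -4 := rfl
  have w2 : (![2, -4, 2, -2, 4, -2] : Fin 6 → ℝ) 2 = 2 := rfl
  have w3 : (![2, -4, 2, -2, 4, -2] : Fin 6 → ℝ) 3 = -2 := rfl
  have w4 : (![2, -4, 2, -2, 4, -2] : Fin 6 → ℝ) 4 = 4 := rfl
  have w5 : (![2, -4, 2, -2, 4, -2] : Fin 6 → ℝ) 5 = -2 := rfl
  have b0 : (![0, -(1/2), -1, -5, -(11/2), -6] : Fin 6 → ℝ) 0 = 0 := rfl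
  have b1 : (![0, -(1/2), -1, -5, -(11/2), -6] : Fin 6 → ℝ) 1 = -(1/2) := rfl
  have b2 : (![0, -(1/2), -1, -5, -(11/2), -6] : Fin 6 → ℝ) 2 = -1 := rfl
  have b3 : (![0, -(1/2), -1, -5, -(11/2), -6] : Fin 6 → ℝ) 3 = -5 := rfl
  have b4 : (![0, -(1/2), -1, -5, -(11/2), -6] : Fin 6 → ℝ) 4 = -(11/2) := rfl
  have b5 : (![0, -(1/2), -1, -5, -(11/2), -6] : Fin 6 → ℝ) 5 = -6 := rfl
  simp only [Net.eval, Fin.sum_univ_six, Fin.sum_univ_one, hact,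
    w0, w1, w2, w3, w4, w5, b0, b1, b2, b3, b4, b5, one_mul, add_zero]
  ring_nf

end
end

section
/- Let d,n∈ℕ⁺ with n≥2, K∈ℕ⁺, 𝐦∈{1,…,K}^d, and let α∈ℕ^d be a multi-index with |α| ≤ n−1. Then the function x ↦ x^α·s_𝐦(x) on ℝ^d is exactly realized by a σ₂-NN with depth 3+log₂d−1+log₂n−1 (logarithms rounded up) and width 4n−4+6d. -/
open scoped BigOperators
open MeasureTheory

noncomputable section




/-! The first hidden layer uses only σ₂: each cutoff `s_{m_j}(x_j)` is a C¹ quadratic spline,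
hence a combination of six shifted `σ₂`, and each of the `|α|` coordinate factors of `x^α` is
copied through `u = (σ₂(u+1) + σ₂(-u-1) - σ₂(u-1) - σ₂(1-u)) / 4`. The product of these
`d + |α| ≤ d n` numbers is then formed by a binary tree of σ₂ layers, each multiplying pairs via
`ab = ((a+b)² - a² - b²) / 2` and `t² = σ₂(t) + σ₂(-t)`; the tree has depth
`⌈log₂(d + |α|)⌉ ≤ ⌈log₂ d⌉ + ⌈log₂ n⌉`. -/

open Finset Matrix

namespace Net

def precompLinear : {k p : ℕ} → Net k → Matrix (Fin k) (Fin p) ℝ → Net p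
  | _, _, .out w b, C => .out (w ᵥ* C) b
  | _, _, .layer t W b rest, C => .layer t (of W * C) b rest

@[simp] lemma depth_precompLinear {k p : ℕ} (φ : Net k) (C : Matrix (Fin k) (Fin p) ℝ) :
    (φ.precompLinear C).depth = φ.depth := by
  cases φ <;> rfl

lemma widthLe_precompLinear {k p W : ℕ} {φ : Net k} (C : Matrix (Fin k) (Fin p) ℝ)
    (h : φ.widthLe W) : (φ.precompLinear C).widthLe W := by
  cases φ <;> exact h

lemma eval_precompLinear {k p : ℕ} (φ : Net k) (C : Matrix (Fin k) (Fin p) ℝ) (z : Fin p → ℝ) :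
    (φ.precompLinear C).eval z = φ.eval (C *ᵥ z) := by
  cases φ with
  | out w b =>
    change (w ᵥ* C) ⬝ᵥ z + b = w ⬝ᵥ (C *ᵥ z) + b
    rw [dotProduct_mulVec]
  | layer t W b rest =>
    change rest.eval (fun i => sigAct t (((of W * C) *ᵥ z) i + b i))
      = rest.eval (fun i => sigAct t ((of W *ᵥ (C *ᵥ z)) i + b i))
    rw [mulVec_mulVec]

lemma widthLe_mono : ∀ {m : ℕ} {φ : Net m} {W W' : ℕ}, φ.widthLe W → W ≤ W' → φ.widthLe W'
  | _, .out _ _, _, _, _, _ => trivial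
  | _, .layer _ _ _ _, _, _, h, hW => ⟨h.1.trans hW, widthLe_mono h.2 hW⟩

end Net

def Realizable {m : ℕ} (W L : ℕ) (g : (Fin m → ℝ) → ℝ) : Prop :=
  ∃ φ : Net m, φ.widthLe W ∧ φ.depth ≤ L ∧ ∀ x, φ.eval x = g x

lemma Realizable.mono {m W W' L L' : ℕ} {g : (Fin m → ℝ) → ℝ} (h : Realizable W L g)
    (hW : W ≤ W') (hL : L ≤ L') : Realizable W' L' g :=
  let ⟨φ, hφW, hφL, hφ⟩ := h
  ⟨φ, Net.widthLe_mono hφW hW, hφL.trans hL, hφ⟩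

def IsAffine {m : ℕ} (a : (Fin m → ℝ) → ℝ) : Prop :=
  ∃ (u : Fin m → ℝ) (u₀ : ℝ), ∀ x, a x = u ⬝ᵥ x + u₀

section IsAffine

variable {m : ℕ} {a b : (Fin m → ℝ) → ℝ}

lemma isAffine_const (c : ℝ) : IsAffine fun _ : Fin m → ℝ => c :=
  ⟨0, c, fun x => by simp⟩

lemma isAffine_apply (j : Fin m) : IsAffine fun x : Fin m → ℝ => x j :=
  ⟨Pi.single j 1, 0, fun x => by simp⟩

lemma IsAffine.add (ha : IsAffine a) (hb : IsAffine b) : IsAffine fun x => a x + b x :=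
  let ⟨u, u₀, hu⟩ := ha
  let ⟨v, v₀, hv⟩ := hb
  ⟨u + v, u₀ + v₀, fun x => by simp only [hu, hv, add_dotProduct]; ring⟩

lemma IsAffine.const_mul (ha : IsAffine a) (c : ℝ) : IsAffine fun x => c * a x :=
  let ⟨u, u₀, hu⟩ := ha
  ⟨c • u, c * u₀, fun x => by simp only [hu, smul_dotProduct, smul_eq_mul]; ring⟩

lemma IsAffine.add_const (ha : IsAffine a) (c : ℝ) : IsAffine fun x => a x + c :=
  ha.add (isAffine_const c)

lemma IsAffine.sub_const (ha : IsAffine a) (c : ℝ) : IsAffine fun x => a x - c := by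
  simpa [sub_eq_add_neg] using ha.add_const (-c)

lemma IsAffine.neg (ha : IsAffine a) : IsAffine fun x => -a x := by
  simpa using ha.const_mul (-1)

end IsAffine

lemma sigAct_one (x : ℝ) : sigAct 1 x = sig2 x := rfl

lemma sig2_of_nonpos {x : ℝ} (h : x ≤ 0) : sig2 x = 0 := by simp [sig2, max_eq_left h]

lemma sig2_of_nonneg {x : ℝ} (h : 0 ≤ x) : sig2 x = x ^ 2 := by simp [sig2, max_eq_right h]

lemma sig2_add_sig2_neg (x : ℝ) : sig2 x + sig2 (-x) = x ^ 2 := by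
  rcases le_total x 0 with h | h
  · rw [sig2_of_nonpos h, sig2_of_nonneg (neg_nonneg.2 h)]; ring
  · rw [sig2_of_nonneg h, sig2_of_nonpos (neg_nonpos.2 h)]; ring

def IsSig2Sum {m : ℕ} (w : ℕ) (g : (Fin m → ℝ) → ℝ) : Prop :=
  ∃ (c : Fin w → ℝ) (a : Fin w → (Fin m → ℝ) → ℝ), (∀ r, IsAffine (a r)) ∧
    ∀ x, g x = ∑ r, c r * sig2 (a r x)

def IsSig2Layer {m k : ℕ} (ι : Type) [Fintype ι] (f : (Fin m → ℝ) → Fin k → ℝ) : Prop :=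
  ∃ (C : Matrix (Fin k) ι ℝ) (a : ι → (Fin m → ℝ) → ℝ), (∀ j, IsAffine (a j)) ∧
    ∀ x, f x = C *ᵥ fun j => sig2 (a j x)

section IsSig2Layer

variable {m k : ℕ}

lemma IsSig2Layer.of_isSig2Sum {w : ℕ} {f : (Fin m → ℝ) → Fin k → ℝ}
    (h : ∀ i, IsSig2Sum w fun x => f x i) : IsSig2Layer (Fin k × Fin w) f := by
  choose c a ha hf using h
  refine ⟨fun i p => if p.1 = i then c i p.2 else 0, fun p => a p.1 p.2, fun p => ha p.1 p.2,
    fun x => funext fun i => ?_⟩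
  simp [mulVec, dotProduct, Fintype.sum_prod_type, hf]

lemma IsSig2Layer.append {l : ℕ} {ι κ : Type} [Fintype ι] [Fintype κ]
    {f : (Fin m → ℝ) → Fin k → ℝ} {g : (Fin m → ℝ) → Fin l → ℝ}
    (hf : IsSig2Layer ι f) (hg : IsSig2Layer κ g) :
    IsSig2Layer (ι ⊕ κ) fun x => Fin.append (f x) (g x) := by
  obtain ⟨C, a, ha, hfa⟩ := hf
  obtain ⟨D, b, hb, hgb⟩ := hg
  refine ⟨Fin.append (fun i => Sum.elim (C i) 0) (fun i => Sum.elim 0 (D i)), Sum.elim a b,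
    Sum.forall.2 ⟨ha, hb⟩, fun x => funext fun i => ?_⟩
  refine Fin.addCases (fun i => ?_) (fun i => ?_) i <;>
    simp [mulVec, dotProduct, Fintype.sum_sum_type, hfa, hgb]

lemma IsSig2Layer.realizable_comp {W L : ℕ} {ι : Type} [Fintype ι]
    {f : (Fin m → ℝ) → Fin k → ℝ} (hf : IsSig2Layer ι f) (hι : Fintype.card ι ≤ W)
    {g : (Fin k → ℝ) → ℝ} (hg : Realizable W L g) : Realizable W (L + 1) fun x => g (f x) := by
  obtain ⟨C, a, ha, hfa⟩ := hf
  choose u u₀ hu using ha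
  obtain ⟨ψ, hψW, hψL, hψ⟩ := hg
  let e := Fintype.equivFin ι
  refine ⟨.layer 1 (fun j => u (e.symm j)) (fun j => u₀ (e.symm j))
      (ψ.precompLinear (C.submatrix id e.symm)), ⟨hι, Net.widthLe_precompLinear _ hψW⟩,
    by simpa [Net.depth] using hψL, fun x => ?_⟩
  change (ψ.precompLinear _).eval (fun j => sigAct 1 (u (e.symm j) ⬝ᵥ x + u₀ (e.symm j)))
    = g (f x)
  rw [Net.eval_precompLinear, hψ, hfa]
  congr 1
  ext i
  simp only [sigAct_one, ← hu]
  exact e.symm.sum_comp fun j => C i j * sig2 (a j x)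

end IsSig2Layer

section Gadgets

variable {m : ℕ} {a b : (Fin m → ℝ) → ℝ}

lemma IsAffine.isSig2Sum_mul (ha : IsAffine a) (hb : IsAffine b) :
    IsSig2Sum 6 fun x => a x * b x := by
  refine ⟨![1/2, 1/2, -1/2, -1/2, -1/2, -1/2],
    ![fun x => a x + b x, fun x => -(a x + b x), a, fun x => -a x, b, fun x => -b x],
    ?_, fun x => ?_⟩
  · intro r
    fin_cases r
    exacts [ha.add hb, (ha.add hb).neg, ha, ha.neg, hb, hb.neg]
  · simp only [Fin.sum_univ_six, Matrix.cons_val]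
    linear_combination (-1/2 : ℝ) * sig2_add_sig2_neg (a x + b x)
      + (1/2 : ℝ) * sig2_add_sig2_neg (a x) + (1/2 : ℝ) * sig2_add_sig2_neg (b x)

lemma IsAffine.isSig2Sum_self (ha : IsAffine a) : IsSig2Sum 4 a := by
  refine ⟨![1/4, 1/4, -1/4, -1/4],
    ![fun x => a x + 1, fun x => -(a x + 1), fun x => a x - 1, fun x => -(a x - 1)],
    ?_, fun x => ?_⟩
  · intro r
    fin_cases r
    exacts [ha.add_const 1, (ha.add_const 1).neg, ha.sub_const 1, (ha.sub_const 1).neg]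
  · simp only [Fin.sum_univ_four, Matrix.cons_val]
    linear_combination (-1/4 : ℝ) * sig2_add_sig2_neg (a x + 1)
      + (1/4 : ℝ) * sig2_add_sig2_neg (a x - 1)

lemma sFun_eq_sum_sig2 (z : ℝ) : sFun z =
    2 * sig2 z - 4 * sig2 (z - 1/2) + 2 * sig2 (z - 1)
      - 2 * sig2 (z - 5) + 4 * sig2 (z - 11/2) - 2 * sig2 (z - 6) := by
  unfold sFun
  split_ifs <;> simp (disch := grind) only [sig2_of_nonpos, sig2_of_nonneg] <;> ring

lemma IsAffine.isSig2Sum_sFun (ha : IsAffine a) : IsSig2Sum 6 fun x => sFun (a x) := by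
  refine ⟨![2, -4, 2, -2, 4, -2],
    ![a, fun x => a x - 1/2, fun x => a x - 1, fun x => a x - 5, fun x => a x - 11/2,
      fun x => a x - 6], ?_, fun x => ?_⟩
  · intro r
    fin_cases r
    exacts [ha, ha.sub_const _, ha.sub_const _, ha.sub_const _, ha.sub_const _, ha.sub_const _]
  · simp only [Fin.sum_univ_six, Matrix.cons_val, sFun_eq_sum_sig2]
    ring

end Gadgets

lemma Finset.prod_range_two_mul {M : Type*} [CommMonoid M] (g : ℕ → M) (n : ℕ) :
    ∏ c ∈ range (2 * n), g c = ∏ q ∈ range n, g (2 * q) * g (2 * q + 1) := by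
  induction n with
  | zero => simp
  | succ n ih => rw [mul_add_one, prod_range_succ, prod_range_succ, ih, prod_range_succ, mul_assoc]

def padOne {N : ℕ} (y : Fin N → ℝ) (c : ℕ) : ℝ := if h : c < N then y ⟨c, h⟩ else 1

lemma isAffine_padOne {N : ℕ} (c : ℕ) : IsAffine fun y : Fin N → ℝ => padOne y c := by
  unfold padOne
  split_ifs with h
  exacts [isAffine_apply _, isAffine_const 1]

lemma prod_range_padOne {N L : ℕ} (y : Fin N → ℝ) (hNL : N ≤ L) :
    ∏ c ∈ range L, padOne y c = ∏ k, y k := by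
  rw [← prod_subset (range_subset_range.2 hNL) fun c _ hc => by simp_all [padOne],
    ← Fin.prod_univ_eq_prod_range]
  exact prod_congr rfl fun k _ => dif_pos k.2

lemma realizable_prod :
    ∀ N : ℕ, 1 ≤ N → Realizable (3 * (N + 1)) (Nat.clog 2 N) fun y : Fin N → ℝ => ∏ k, y k
  | 1, _ => ⟨.out (fun _ => 1) 0, trivial, le_rfl, fun y => by simp [Net.eval]⟩
  | N + 2, _ => by
    set M := (N + 3) / 2
    have hpairs : IsSig2Layer (Fin M × Fin 6) fun (y : Fin (N + 2) → ℝ) (q : Fin M) =>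
        padOne y (2 * q) * padOne y (2 * q + 1) :=
      .of_isSig2Sum fun q => (isAffine_padOne _).isSig2Sum_mul (isAffine_padOne _)
    have hprod : ∀ y : Fin (N + 2) → ℝ,
        ∏ q : Fin M, padOne y (2 * q) * padOne y (2 * q + 1) = ∏ k, y k := fun y => by
      rw [Fin.prod_univ_eq_prod_range (fun q => padOne y (2 * q) * padOne y (2 * q + 1)),
        ← prod_range_two_mul, prod_range_padOne y (by omega)]
    rw [Nat.clog_of_two_le one_lt_two (by omega), show (N + 2 + 2 - 1) / 2 = M by omega]
    simpa only [hprod] using hpairs.realizable_comp (W := 3 * (N + 3))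
      (by simp only [Fintype.card_prod, Fintype.card_fin]; omega)
      ((realizable_prod M (by omega)).mono (by omega) le_rfl)

lemma Nat.clog_mul_le {b : ℕ} (hb : 1 < b) (m n : ℕ) :
    Nat.clog b (m * n) ≤ Nat.clog b m + Nat.clog b n := by
  rw [Nat.clog_le_iff_le_pow hb, pow_add]
  exact Nat.mul_le_mul (Nat.le_pow_clog hb m) (Nat.le_pow_clog hb n)

lemma exists_prod_comp_eq_prod_pow {ι : Type*} [Fintype ι] (M : Type*) [CommMonoid M]
    (α : ι → ℕ) : ∃ idx : Fin (∑ i, α i) → ι, ∀ x : ι → M, ∏ t, x (idx t) = ∏ i, x i ^ α i := by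
  let e : (Σ i, Fin (α i)) ≃ Fin (∑ i, α i) := Fintype.equivFinOfCardEq (by simp)
  refine ⟨fun t => (e.symm t).1, fun x => ?_⟩
  rw [e.symm.prod_comp fun p => x p.1, Fintype.prod_sigma]
  simp

lemma isSig2Layer_smOne_append {d A : ℕ} (K : ℕ) (mv : Fin d → ℕ) (idx : Fin A → Fin d) :
    IsSig2Layer (Fin d × Fin 6 ⊕ Fin A × Fin 4) fun x =>
      Fin.append (fun j => smOne K (mv j) (x j)) fun t => x (idx t) :=
  (IsSig2Layer.of_isSig2Sum fun j =>
      (((isAffine_apply j).const_mul _).add_const 5 |>.sub_const _).isSig2Sum_sFun).append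
    (.of_isSig2Sum fun t => (isAffine_apply (idx t)).isSig2Sum_self)

theorem trunk_basis_network_general
    (d n K : ℕ) (hd : 0 < d) (hn : 2 ≤ n)
    (mv : Fin d → ℕ)
    (α : Fin d → ℕ) (hα : ∑ i, α i ≤ n - 1) :
    ∃ φ : Net d, φ.widthLe (4 * n - 4 + 6 * d) ∧
      φ.depth ≤ 1 + Nat.clog 2 d + Nat.clog 2 n ∧
      ∀ x : Fin d → ℝ, φ.eval x = (∏ i, x i ^ α i) * smProd d K mv x := by
  obtain ⟨idx, hidx⟩ := exists_prod_comp_eq_prod_pow ℝ α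
  have hdA : d + ∑ i, α i ≤ d * n := calc
    d + ∑ i, α i ≤ d + d * (n - 1) := by gcongr; exact hα.trans (Nat.le_mul_of_pos_left _ hd)
    _ = d * n := by rw [add_comm, ← mul_add_one, Nat.sub_add_cancel (by omega)]
  have hclog := (Nat.clog_mono_right 2 hdA).trans (Nat.clog_mul_le one_lt_two d n)
  obtain ⟨φ, hφW, hφL, hφ⟩ := (isSig2Layer_smOne_append K mv idx).realizable_comp
    (W := 4 * n - 4 + 6 * d)
    (by simp only [Fintype.card_sum, Fintype.card_prod, Fintype.card_fin]; omega)
    ((realizable_prod (d + ∑ i, α i) (by omega)).mono (by omega) hclog)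
  refine ⟨φ, hφW, by omega, fun x => ?_⟩
  simp only [hφ, Fin.prod_univ_add, Fin.append_left, Fin.append_right, hidx, smProd, mul_comm]

/-- each trunk basis function `x ↦ x^α s_𝐦(x)` (with `|α| ≤ n-1`) is exactly
realized by a σ₂ neural network of depth `3 + log₂ d - 1 + log₂ n - 1` (logs rounded up)
and width `4n - 4 + 6d`. -/
theorem trunk_basis_network
    (d n K : ℕ) (hd : 0 < d) (hn : 2 ≤ n) (hK : 0 < K)
    (mv : Fin d → ℕ) (hmv : ∀ j, 1 ≤ mv j ∧ mv j ≤ K)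
    (α : Fin d → ℕ) (hα : ∑ i, α i ≤ n - 1) :
    ∃ φ : Net d, φ.widthLe (4 * n - 4 + 6 * d) ∧
      φ.depth ≤ 1 + Nat.clog 2 d + Nat.clog 2 n ∧
      ∀ x : Fin d → ℝ, φ.eval x = (∏ i, x i ^ α i) * smProd d K mv x :=
  trunk_basis_network_general d n K hd hn mv α hα

end
end
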